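/- arXiv:2308.08896 — 8 statements merged into one kernel-verified Lean document; each statement's English description precedes it below -/
import Mathlib

section
/- Suppose f* is a feasible allocation with ∑_n f*(n) = F_s such that all client latencies are equal, i.e., there is a real number T̄ with c(n) + ε(n)/f*(n) = T̄ for every n. Then for every feasible allocation f, the per-round training time satisfies max_n (c(n) + ε(n)/f(n)) ≥ T̄; i.e., the equal-latency allocation minimizes the per-round training time (Lemma 1). -/
/-- Lemma 1 (optimality of the equal-latency allocation): if a feasible allocation `fstar`
uses the full server budget `Fs` and equalizes all client latencies at the common value `T`,
then every feasible allocation `f` has per-round training time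
`max_n (c n + ε n / f n)` at least `T`. -/
theorem equal_latency_allocation_is_optimal
    {N : ℕ} (hN : 1 ≤ N) (ε c : Fin N → ℝ) (hε : ∀ n, 0 < ε n)
    (Fs : ℝ) (hFs : 0 < Fs)
    (fstar : Fin N → ℝ) (hfstarPos : ∀ n, 0 < fstar n)
    (hfstarSum : ∑ n, fstar n = Fs)
    (T : ℝ) (hT : ∀ n, c n + ε n / fstar n = T)
    (f : Fin N → ℝ) (hfPos : ∀ n, 0 < f n) (hfSum : ∑ n, f n ≤ Fs) :
    T ≤ Finset.univ.sup' ⟨⟨0, hN⟩, Finset.mem_univ _⟩ (fun n => c n + ε n / f n) := by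
  by_contra h
  push_neg at h
  have hlt : ∀ n, c n + ε n / f n < T := fun n =>
    lt_of_le_of_lt (Finset.le_sup' (fun n => c n + ε n / f n) (Finset.mem_univ n)) h
  have hgt : ∀ n, fstar n < f n := by
    intro n
    have h1 : ε n / f n < ε n / fstar n := by
      have := hlt n; rw [← hT n] at this; linarith
    have := (div_lt_div_iff₀ (hfPos n) (hfstarPos n)).mp h1
    nlinarith [hε n, hfPos n, hfstarPos n]
  have : Fs < ∑ n, f n := by
    rw [← hfstarSum]
    exact Finset.sum_lt_sum_of_nonempty ⟨⟨0, hN⟩, Finset.mem_univ _⟩ fun n _ => hgt n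
  linarith
end

section
/- Suppose f* is a feasible allocation with ∑_n f*(n) = F_s such that all client latencies are equal to a common value T̄, i.e., c(n) + ε(n)/f*(n) = T̄ for every n. Then every feasible allocation f with f ≠ f* satisfies max_n (c(n) + ε(n)/f(n)) > T̄; i.e., the equal-latency allocation is the unique minimizer of the per-round training time. -/
/-- Uniqueness of the minimizer: if a feasible allocation `fstar` uses the full server budget
`Fs` and equalizes all client latencies at the common value `T`, then every feasible
allocation `f` different from `fstar` has per-round training time strictly greater than `T`. -/
theorem equal_latency_allocation_unique_minimizer
    {N : ℕ} (hN : 1 ≤ N) (ε c : Fin N → ℝ) (hε : ∀ n, 0 < ε n)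
    (Fs : ℝ) (hFs : 0 < Fs)
    (fstar : Fin N → ℝ) (hfstarPos : ∀ n, 0 < fstar n)
    (hfstarSum : ∑ n, fstar n = Fs)
    (T : ℝ) (hT : ∀ n, c n + ε n / fstar n = T)
    (f : Fin N → ℝ) (hfPos : ∀ n, 0 < f n) (hfSum : ∑ n, f n ≤ Fs)
    (hne : f ≠ fstar) :
    T < Finset.univ.sup' ⟨⟨0, hN⟩, Finset.mem_univ _⟩ (fun n => c n + ε n / f n) := by
  by_contra h
  push_neg at h
  replace h := (Finset.sup'_le_iff _ _).mp h
  have hle : ∀ n, fstar n ≤ f n := by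
    intro n
    have h1 : c n + ε n / f n ≤ c n + ε n / fstar n := by
      rw [hT n]; exact h n (Finset.mem_univ n)
    have h2 : ε n / f n ≤ ε n / fstar n := by linarith
    rw [div_le_div_iff₀ (hfPos n) (hfstarPos n)] at h2
    exact le_of_mul_le_mul_left (by linarith [h2]) (hε n)
  obtain ⟨m, hm⟩ := Function.ne_iff.mp hne
  have hlt : fstar m < f m := lt_of_le_of_ne (hle m) (Ne.symm hm)
  have : ∑ n, fstar n < ∑ n, f n :=
    Finset.sum_lt_sum (fun n _ => hle n) ⟨m, Finset.mem_univ m, hlt⟩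
  linarith [hfstarSum ▸ hfSum]
end

section
/- If f is a feasible allocation with ∑_n f(n) < F_s, then there exists a feasible allocation f' with ∑_n f'(n) ≤ F_s such that max_n (c(n) + ε(n)/f'(n)) < max_n (c(n) + ε(n)/f(n)); consequently, any allocation minimizing the per-round training time must use the full server budget, ∑_n f(n) = F_s. -/
/-! Scaling a slack allocation `f` by `Fs / ∑ n, f n > 1` spends exactly the budget and enlarges
every `f n`, so every latency `c n + ε n / f n` strictly drops, and with it their maximum. A minimizer
with slack could be improved this way, which is absurd. -/

open Finset

theorem Finset.sup'_lt_sup'_of_forall_lt {α β : Type*} [LinearOrder β] {s : Finset α}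
    (H : s.Nonempty) {f g : α → β} (h : ∀ i ∈ s, f i < g i) : s.sup' H f < s.sup' H g :=
  (sup'_lt_iff H).2 fun i hi => (h i hi).trans_le (le_sup' g hi)

theorem add_div_lt_add_div_of_lt {c ε a b : ℝ} (hε : 0 < ε) (ha : 0 < a) (hab : a < b) :
    c + ε / b < c + ε / a :=
  add_lt_add_right (div_lt_div_of_pos_left hε ha hab) c

theorem sum_mul_div_sum_self {ι : Type*} [Fintype ι] (f : ι → ℝ) (B : ℝ) (hf : ∑ i, f i ≠ 0) :
    ∑ i, f i * (B / ∑ j, f j) = B := by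
  rw [← sum_mul, mul_div_cancel₀ _ hf]

theorem exists_latency_sup'_lt_of_sum_lt {ι : Type*} [Fintype ι] (H : (univ : Finset ι).Nonempty)
    {ε : ι → ℝ} (hε : ∀ i, 0 < ε i) (c : ι → ℝ) {B : ℝ} {f : ι → ℝ} (hf : ∀ i, 0 < f i)
    (hsum : ∑ i, f i < B) :
    ∃ f' : ι → ℝ, (∀ i, 0 < f' i) ∧ ∑ i, f' i ≤ B ∧
      univ.sup' H (fun i => c i + ε i / f' i) < univ.sup' H (fun i => c i + ε i / f i) := by
  have hS : 0 < ∑ i, f i := sum_pos (fun i _ => hf i) H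
  have hr : 1 < B / ∑ i, f i := (one_lt_div hS).2 hsum
  have hgrow : ∀ i, f i < f i * (B / ∑ j, f j) := fun i => lt_mul_of_one_lt_right (hf i) hr
  refine ⟨fun i => f i * (B / ∑ j, f j), fun i => (hf i).trans (hgrow i),
    (sum_mul_div_sum_self f B hS.ne').le, ?_⟩
  exact sup'_lt_sup'_of_forall_lt H fun i _ => add_div_lt_add_div_of_lt (hε i) (hf i) (hgrow i)

theorem slack_allocation_improvable_and_minimizer_uses_full_budget_general
    {N : ℕ} (hN : 1 ≤ N) (ε c : Fin N → ℝ) (hε : ∀ n, 0 < ε n)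
    (Fs : ℝ) :
    (∀ f : Fin N → ℝ, (∀ n, 0 < f n) → (∑ n, f n < Fs) →
      ∃ f' : Fin N → ℝ, (∀ n, 0 < f' n) ∧ (∑ n, f' n ≤ Fs) ∧
        Finset.univ.sup' ⟨⟨0, hN⟩, Finset.mem_univ _⟩ (fun n => c n + ε n / f' n) <
          Finset.univ.sup' ⟨⟨0, hN⟩, Finset.mem_univ _⟩ (fun n => c n + ε n / f n)) ∧
    (∀ f : Fin N → ℝ, (∀ n, 0 < f n) → (∑ n, f n ≤ Fs) →
      (∀ g : Fin N → ℝ, (∀ n, 0 < g n) → (∑ n, g n ≤ Fs) →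
        Finset.univ.sup' ⟨⟨0, hN⟩, Finset.mem_univ _⟩ (fun n => c n + ε n / f n) ≤
          Finset.univ.sup' ⟨⟨0, hN⟩, Finset.mem_univ _⟩ (fun n => c n + ε n / g n)) →
      ∑ n, f n = Fs) := by
  refine ⟨fun f hf hsum => exists_latency_sup'_lt_of_sum_lt _ hε c hf hsum,
    fun f hf hsum hmin => hsum.eq_of_not_lt fun hslack => ?_⟩
  obtain ⟨g, hg, hgsum, hlt⟩ :=
    exists_latency_sup'_lt_of_sum_lt ⟨⟨0, hN⟩, mem_univ _⟩ hε c hf hslack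
  exact (hmin g hg hgsum).not_gt hlt

/-- If a feasible allocation `f` does not use the full server budget (`∑ n, f n < Fs`),
then there is a feasible allocation `f'` with strictly smaller per-round training time;
consequently, any allocation minimizing the per-round training time uses the full budget. -/
theorem slack_allocation_improvable_and_minimizer_uses_full_budget
    {N : ℕ} (hN : 1 ≤ N) (ε c : Fin N → ℝ) (hε : ∀ n, 0 < ε n)
    (Fs : ℝ) (hFs : 0 < Fs) :
    (∀ f : Fin N → ℝ, (∀ n, 0 < f n) → (∑ n, f n < Fs) →
      ∃ f' : Fin N → ℝ, (∀ n, 0 < f' n) ∧ (∑ n, f' n ≤ Fs) ∧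
        Finset.univ.sup' ⟨⟨0, hN⟩, Finset.mem_univ _⟩ (fun n => c n + ε n / f' n) <
          Finset.univ.sup' ⟨⟨0, hN⟩, Finset.mem_univ _⟩ (fun n => c n + ε n / f n)) ∧
    (∀ f : Fin N → ℝ, (∀ n, 0 < f n) → (∑ n, f n ≤ Fs) →
      (∀ g : Fin N → ℝ, (∀ n, 0 < g n) → (∑ n, g n ≤ Fs) →
        Finset.univ.sup' ⟨⟨0, hN⟩, Finset.mem_univ _⟩ (fun n => c n + ε n / f n) ≤
          Finset.univ.sup' ⟨⟨0, hN⟩, Finset.mem_univ _⟩ (fun n => c n + ε n / g n)) →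
      ∑ n, f n = Fs) :=
  slack_allocation_improvable_and_minimizer_uses_full_budget_general hN ε c hε Fs
end

section
/- There exists exactly one allocation f with f(n) > 0 for all n, ∑_n f(n) = F_s, and all client latencies equal, i.e., c(m) + ε(m)/f(m) = c(n) + ε(n)/f(n) for all m, n. -/
/-- Existence and uniqueness of the equal-latency allocation: there is exactly one allocation
`f` with positive entries, total `Fs`, and all client latencies equal. -/
theorem equal_latency_allocation_exists_unique
    {N : ℕ} (hN : 1 ≤ N) (ε c : Fin N → ℝ) (hε : ∀ n, 0 < ε n)
    (Fs : ℝ) (hFs : 0 < Fs) :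
    ∃! f : Fin N → ℝ, (∀ n, 0 < f n) ∧ (∑ n, f n = Fs) ∧
      (∀ m n : Fin N, c m + ε m / f m = c n + ε n / f n) := by
  haveI : Nonempty (Fin N) := ⟨⟨0, hN⟩⟩
  have hne : (Finset.univ : Finset (Fin N)).Nonempty := Finset.univ_nonempty
  set M : ℝ := Finset.univ.sup' hne c with hM
  have hcM : ∀ n, c n ≤ M := fun n => Finset.le_sup' c (Finset.mem_univ n)
  obtain ⟨n₀, -, hn₀⟩ := Finset.exists_mem_eq_sup' hne c
  set g : ℝ → ℝ := fun L => ∑ n, ε n / (L - c n) with hg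
  -- g is strictly antitone on (M, ∞)
  have hanti : StrictAntiOn g (Set.Ioi M) := by
    intro L₁ h₁ L₂ h₂ hlt
    simp only [hg]
    apply Finset.sum_lt_sum
    · intro n _
      have h1 : (0:ℝ) < L₁ - c n := by
        have := hcM n; have := Set.mem_Ioi.mp h₁; linarith
      exact div_le_div_of_nonneg_left (hε n).le h1 (by linarith)
    · refine ⟨⟨0, hN⟩, Finset.mem_univ _, ?_⟩
      have h1 : (0:ℝ) < L₁ - c ⟨0, hN⟩ := by
        have := hcM ⟨0, hN⟩; have := Set.mem_Ioi.mp h₁; linarith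
      exact div_lt_div_of_pos_left (hε ⟨0, hN⟩) h1 (by linarith)
  have hS : (0:ℝ) < ∑ n, ε n := Finset.sum_pos (fun n _ => hε n) hne
  set S : ℝ := ∑ n, ε n with hSdef
  set t : ℝ := S / Fs with ht
  set s : ℝ := ε n₀ / Fs with hs
  have hspos : 0 < s := div_pos (hε n₀) hFs
  have htpos : 0 < t := div_pos hS hFs
  have hst : s ≤ t := by
    rw [hs, ht]
    gcongr
    exact Finset.single_le_sum (fun n _ => (hε n).le) (Finset.mem_univ n₀)
  -- continuity on [M+s, M+t]
  have hcont : ContinuousOn g (Set.Icc (M + s) (M + t)) := by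
    apply continuousOn_finset_sum
    intro n _
    apply ContinuousOn.div continuousOn_const
    · exact (continuousOn_id.sub continuousOn_const)
    · intro x hx
      have hx1 := hx.1
      have h2 := hcM n
      have h3 : (0:ℝ) < x - c n := by linarith
      exact ne_of_gt h3
  have hga : Fs ≤ g (M + s) := by
    have hterm : ε n₀ / (M + s - c n₀) = Fs := by
      rw [← hn₀, show M + s - M = s by ring, hs, div_div_eq_mul_div]
      exact mul_div_cancel_left₀ Fs (ne_of_gt (hε n₀))
    calc Fs = ε n₀ / (M + s - c n₀) := hterm.symm
      _ ≤ g (M + s) := by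
          apply Finset.single_le_sum (f := fun n => ε n / (M + s - c n))
            (fun n _ => ?_) (Finset.mem_univ n₀)
          have := hcM n
          exact div_nonneg (hε n).le (by linarith)
  have hgb : g (M + t) ≤ Fs := by
    have : g (M + t) ≤ ∑ n, ε n / t := by
      apply Finset.sum_le_sum
      intro n _
      have := hcM n
      gcongr
      · exact (hε n).le
      · linarith
    calc g (M + t) ≤ ∑ n, ε n / t := this
      _ = S / t := by rw [hSdef, Finset.sum_div]
      _ = Fs := by rw [ht]; field_simp
  -- IVT
  have hab : M + s ≤ M + t := by linarith
  have hmem : Fs ∈ Set.Icc (g (M + t)) (g (M + s)) := ⟨hgb, hga⟩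
  obtain ⟨L, hLmem, hgL⟩ := intermediate_value_Icc' hab hcont hmem
  have hLM : L ∈ Set.Ioi M := Set.mem_Ioi.mpr (by have := hLmem.1; linarith)
  have hLc : ∀ n, 0 < L - c n := by
    intro n
    have := hcM n; have := Set.mem_Ioi.mp hLM; linarith
  set f₀ : Fin N → ℝ := fun n => ε n / (L - c n) with hf₀
  refine ⟨f₀, ⟨fun n => div_pos (hε n) (hLc n), hgL, ?_⟩, ?_⟩
  · intro m n
    have key : ∀ k, c k + ε k / f₀ k = L := by
      intro k
      have hk : f₀ k = ε k / (L - c k) := rfl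
      rw [hk, div_div_eq_mul_div, mul_div_cancel_left₀ _ (ne_of_gt (hε k))]
      ring
    rw [key m, key n]
  · rintro f ⟨hfpos, hfsum, hfeq⟩
    set L' : ℝ := c ⟨0, hN⟩ + ε ⟨0, hN⟩ / f ⟨0, hN⟩ with hL'
    have hlat : ∀ n, c n + ε n / f n = L' := fun n => hfeq n ⟨0, hN⟩
    have hL'c : ∀ n, L' - c n = ε n / f n := by
      intro n; have := hlat n; linarith
    have hL'pos : ∀ n, 0 < L' - c n := by
      intro n; rw [hL'c n]; exact div_pos (hε n) (hfpos n)
    have hfn : ∀ n, f n = ε n / (L' - c n) := by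
      intro n
      rw [hL'c n, div_div_eq_mul_div, mul_div_cancel_left₀ _ (ne_of_gt (hε n))]
    have hL'M : L' ∈ Set.Ioi M := by
      have hM0 : M = c n₀ := hn₀
      have := hL'pos n₀
      rw [Set.mem_Ioi, hM0]; linarith
    have hgL' : g L' = Fs := by
      rw [hg]
      simp only
      rw [← hfsum]
      exact Finset.sum_congr rfl fun n _ => (hfn n).symm
    have hLL : L' = L := hanti.injOn hL'M hLM (by rw [hgL', hgL])
    funext n
    rw [hfn n, hLL]
end

section
/- Let k ∈ Fin N satisfy c(k) ≥ c(n) for all n. If f is an allocation with f(n) > 0 for all n, ∑_n f(n) = F_s, and all client latencies equal (c(m) + ε(m)/f(m) = c(n) + ε(n)/f(n) for all m, n), then ∑_n ε(n)·f(k) / (ε(k) + f(k)·(c(k) − c(n))) = F_s (Lemma 2). -/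
/-- Lemma 2: let `k` be a client with maximal local latency (`c k ≥ c n` for all `n`).
If `f` is a positive allocation exhausting the budget `Fs` and equalizing all client
latencies, then `∑ n, ε n * f k / (ε k + f k * (c k - c n)) = Fs` (Equation (20)). -/
theorem equal_latency_budget_equation
    {N : ℕ} (hN : 1 ≤ N) (ε c : Fin N → ℝ) (hε : ∀ n, 0 < ε n)
    (Fs : ℝ) (hFs : 0 < Fs)
    (k : Fin N) (hk : ∀ n, c n ≤ c k)
    (f : Fin N → ℝ) (hfPos : ∀ n, 0 < f n) (hfSum : ∑ n, f n = Fs)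
    (heq : ∀ m n : Fin N, c m + ε m / f m = c n + ε n / f n) :
    ∑ n, ε n * f k / (ε k + f k * (c k - c n)) = Fs := by
  rw [← hfSum]
  apply Finset.sum_congr rfl
  intro n _
  have hfk := (hfPos k).ne'
  have hfn := (hfPos n).ne'
  have h := heq k n
  have hden : ε k + f k * (c k - c n) = f k * (ε n / f n) := by
    field_simp at h ⊢
    nlinarith [h]
  have hεn := (hε n).ne'
  rw [hden]
  field_simp
end

section
/- Let k ∈ Fin N satisfy c(k) ≥ c(n) for all n, and define g : (0, ∞) → ℝ by g(x) = ∑_n ε(n)·x / (ε(k) + x·(c(k) − c(n))). Then for every F_s > 0 there exists a unique x > 0 with g(x) = F_s (so Equation (20) can be solved by bisection). -/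
/-- Solvability of Equation (20): with `k` a client of maximal local latency and
`g x = ∑ n, ε n * x / (ε k + x * (c k - c n))`, for every budget `Fs > 0` there is a
unique `x > 0` with `g x = Fs`. -/
theorem budget_equation_exists_unique_solution
    {N : ℕ} (hN : 1 ≤ N) (ε c : Fin N → ℝ) (hε : ∀ n, 0 < ε n)
    (k : Fin N) (hk : ∀ n, c n ≤ c k)
    (Fs : ℝ) (hFs : 0 < Fs) :
    ∃! x : ℝ, 0 < x ∧ ∑ n, ε n * x / (ε k + x * (c k - c n)) = Fs := by
  set g : ℝ → ℝ := fun x => ∑ n, ε n * x / (ε k + x * (c k - c n)) with hg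
  have hεk := hε k
  have hden : ∀ (x : ℝ), 0 < x → ∀ n, 0 < ε k + x * (c k - c n) := by
    intro x hx n
    have : 0 ≤ x * (c k - c n) := mul_nonneg hx.le (by linarith [hk n])
    linarith
  -- strict monotonicity on (0,∞)
  have hmono : ∀ x y : ℝ, 0 < x → x < y → g x < g y := by
    intro x y hx hxy
    have hy : 0 < y := hx.trans hxy
    apply Finset.sum_lt_sum
    · intro n _
      have h1 := hden x hx n
      have h2 := hden y hy n
      rw [div_le_div_iff₀ h1 h2]
      have hεn := hε n
      have hd : 0 ≤ c k - c n := by linarith [hk n]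
      nlinarith [mul_pos (mul_pos hεn hεk) (sub_pos.mpr hxy)]
    · refine ⟨k, Finset.mem_univ _, ?_⟩
      simp only [sub_self, mul_zero, add_zero]
      have hxk : ε k * x / ε k = x := by field_simp
      have hyk : ε k * y / ε k = y := by field_simp
      rw [hxk, hyk]; exact hxy
  -- g x ≥ x
  have hgeq : ∀ x : ℝ, 0 < x → x ≤ g x := by
    intro x hx
    have : ε k * x / (ε k + x * (c k - c k)) = x := by
      field_simp
      simp [hεk.ne']
    calc x = ε k * x / (ε k + x * (c k - c k)) := this.symm
      _ ≤ g x := Finset.single_le_sum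
          (f := fun n => ε n * x / (ε k + x * (c k - c n)))
          (fun n _ => by
            have h1 := hden x hx n
            have := (hε n).le
            positivity) (Finset.mem_univ k)
  -- g x ≤ S * x where S = (∑ ε n)/ε k
  set S : ℝ := (∑ n, ε n) / ε k with hS
  have hSk : 1 ≤ S := by
    rw [hS, le_div_iff₀ hεk, one_mul]
    exact Finset.single_le_sum (fun n _ => (hε n).le) (Finset.mem_univ k)
  have hS0 : 0 < S := by linarith
  have hle : ∀ x : ℝ, 0 < x → g x ≤ S * x := by
    intro x hx
    have : g x ≤ ∑ n, ε n * x / ε k := by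
      apply Finset.sum_le_sum
      intro n _
      have h1 := hden x hx n
      rw [div_le_div_iff₀ h1 hεk]
      nlinarith [mul_nonneg (mul_nonneg (hε n).le hx.le) (mul_nonneg hx.le (sub_nonneg.mpr (hk n)))]
    calc g x ≤ ∑ n, ε n * x / ε k := this
      _ = S * x := by rw [hS]; rw [← Finset.sum_div, ← Finset.sum_mul]; ring
  -- endpoints
  set a : ℝ := Fs / (2 * S) with ha
  have ha0 : 0 < a := by positivity
  have hab : a < Fs := by
    rw [ha, div_lt_iff₀ (by positivity)]
    nlinarith
  have hgaleq : g a ≤ Fs := by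
    have := hle a ha0
    have : S * a = Fs / 2 := by rw [ha]; field_simp
    linarith [hle a ha0]
  have hgb : Fs ≤ g Fs := hgeq Fs hFs
  -- continuity on [a, Fs]
  have hcont : ContinuousOn g (Set.Icc a Fs) := by
    apply continuousOn_finset_sum
    intro n _
    apply ContinuousOn.div
    · exact (continuous_const.mul continuous_id).continuousOn
    · exact (continuous_const.add (continuous_id.mul continuous_const)).continuousOn
    · intro x hx
      exact (hden x (lt_of_lt_of_le ha0 hx.1) n).ne'
  have := intermediate_value_Icc hab.le hcont
  obtain ⟨x, hxmem, hxval⟩ := this ⟨hgaleq, hgb⟩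
  have hx0 : 0 < x := lt_of_lt_of_le ha0 hxmem.1
  refine ⟨x, ⟨hx0, hxval⟩, ?_⟩
  rintro y ⟨hy0, hyval⟩
  have hyg : g y = Fs := hyval
  by_contra hne
  rcases lt_or_gt_of_ne hne with h | h
  · have := hmono y x hy0 h; rw [hxval, hyg] at this; exact lt_irrefl _ this
  · have := hmono x y hx0 h; rw [hxval, hyg] at this; exact lt_irrefl _ this
end

section
/- Let k ∈ Fin N satisfy c(k) ≥ c(n) for all n, and let x* > 0 satisfy ∑_n ε(n)·x* / (ε(k) + x*·(c(k) − c(n))) = F_s. Define f(n) = ε(n)·x* / (ε(k) + x*·(c(k) − c(n))) for every n. Then f(n) > 0 for all n, f(k) = x*, ∑_n f(n) = F_s, all client latencies c(n) + ε(n)/f(n) are equal, and f minimizes the per-round training time max_n (c(n) + ε(n)/f(n)) over all feasible allocations. -/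
/-- Optimality of the allocation built from the solution of Equation (20): with `k` a client
of maximal local latency and `x* > 0` solving `∑ n, ε n * x* / (ε k + x* * (c k - c n)) = Fs`,
the allocation `f n = ε n * x* / (ε k + x* * (c k - c n))` is positive, satisfies `f k = x*`,
exhausts the budget, equalizes all client latencies, and minimizes the per-round training
time over all feasible allocations. -/
theorem allocation_from_budget_equation_is_optimal
    {N : ℕ} (hN : 1 ≤ N) (ε c : Fin N → ℝ) (hε : ∀ n, 0 < ε n)
    (Fs : ℝ) (hFs : 0 < Fs)
    (k : Fin N) (hk : ∀ n, c n ≤ c k)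
    (xstar : ℝ) (hx : 0 < xstar)
    (hsol : ∑ n, ε n * xstar / (ε k + xstar * (c k - c n)) = Fs)
    (f : Fin N → ℝ) (hf : ∀ n, f n = ε n * xstar / (ε k + xstar * (c k - c n))) :
    (∀ n, 0 < f n) ∧ f k = xstar ∧ (∑ n, f n = Fs) ∧
      (∀ m n : Fin N, c m + ε m / f m = c n + ε n / f n) ∧
      (∀ g : Fin N → ℝ, (∀ n, 0 < g n) → (∑ n, g n ≤ Fs) →
        Finset.univ.sup' ⟨⟨0, hN⟩, Finset.mem_univ _⟩ (fun n => c n + ε n / f n) ≤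
          Finset.univ.sup' ⟨⟨0, hN⟩, Finset.mem_univ _⟩ (fun n => c n + ε n / g n)) := by
  have hd : ∀ n, 0 < ε k + xstar * (c k - c n) := fun n =>
    add_pos_of_pos_of_nonneg (hε k) (mul_nonneg hx.le (sub_nonneg.2 (hk n)))
  have hfpos : ∀ n, 0 < f n := fun n => by
    rw [hf n]; exact div_pos (mul_pos (hε n) hx) (hd n)
  have hfk : f k = xstar := by
    rw [hf k, sub_self, mul_zero, add_zero, mul_comm, mul_div_assoc, div_self (hε k).ne', mul_one]
  have hsum : ∑ n, f n = Fs := by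
    rw [Finset.sum_congr rfl (fun n _ => hf n)]; exact hsol
  have hlat : ∀ n, c n + ε n / f n = c k + ε k / xstar := by
    intro n
    rw [hf n, div_div_eq_mul_div, mul_div_mul_left _ _ (hε n).ne', add_div,
      mul_div_cancel_left₀ _ hx.ne']
    ring
  refine ⟨hfpos, hfk, hsum, fun m n => by rw [hlat m, hlat n], ?_⟩
  intro g hg hgsum
  set L := c k + ε k / xstar with hL
  have hsupf : Finset.univ.sup' ⟨⟨0, hN⟩, Finset.mem_univ _⟩ (fun n => c n + ε n / f n) = L := by
    apply le_antisymm
    · exact Finset.sup'_le _ _ fun n _ => (hlat n).le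
    · exact (hlat ⟨0, hN⟩).ge.trans
        (Finset.le_sup' (fun n => c n + ε n / f n) (Finset.mem_univ ⟨0, hN⟩))
  rw [hsupf]
  by_contra hcon
  push_neg at hcon
  have hlt : ∀ n, c n + ε n / g n < L := fun n =>
    lt_of_le_of_lt (Finset.le_sup' (fun n => c n + ε n / g n) (Finset.mem_univ n)) hcon
  have hfg : ∀ n, f n < g n := by
    intro n
    have h1 : ε n / g n < (ε k + xstar * (c k - c n)) / xstar := by
      have := hlt n
      have hLc : L - c n = (ε k + xstar * (c k - c n)) / xstar := by
        rw [hL]; field_simp; ring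
      linarith [hLc ▸ (by linarith : ε n / g n < L - c n)]
    have h2 : ε n * xstar < g n * (ε k + xstar * (c k - c n)) := by
      rw [div_lt_div_iff₀ (hg n) hx] at h1
      linarith
    rw [hf n, div_lt_iff₀ (hd n)]
    linarith
  have : Fs < ∑ n, g n := by
    rw [← hsum]
    exact Finset.sum_lt_sum_of_nonempty ⟨⟨0, hN⟩, Finset.mem_univ _⟩ fun n _ => hfg n
  linarith
end

section
/- Let C = max_n c(n) and define h : (C, ∞) → ℝ by h(T) = ∑_n ε(n)/(T − c(n)). Then h is strictly decreasing on (C, ∞), and there is a unique T̄ > C with h(T̄) = F_s; moreover, the allocation f(n) = ε(n)/(T̄ − c(n)) is feasible, satisfies ∑_n f(n) = F_s, equalizes all client latencies at the common value T̄, and T̄ equals the minimum over feasible allocations of the per-round training time. -/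
/-- With `C = max_n (c n)` and `h T = ∑ n, ε n / (T - c n)` on `(C, ∞)`: `h` is strictly
decreasing on `(C, ∞)`, there is a unique `T̄ > C` with `h T̄ = Fs`, and for this `T̄` the
allocation `f n = ε n / (T̄ - c n)` is feasible, exhausts the budget, equalizes all client
latencies at `T̄`, achieves per-round training time `T̄`, and `T̄` is the minimum over
feasible allocations of the per-round training time. -/
theorem equal_latency_fixed_point_characterization
    {N : ℕ} (hN : 1 ≤ N) (ε c : Fin N → ℝ) (hε : ∀ n, 0 < ε n)
    (Fs : ℝ) (hFs : 0 < Fs)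
    (C : ℝ) (hC : C = Finset.univ.sup' ⟨⟨0, hN⟩, Finset.mem_univ _⟩ c) :
    StrictAntiOn (fun T : ℝ => ∑ n, ε n / (T - c n)) (Set.Ioi C) ∧
    (∃! T : ℝ, C < T ∧ ∑ n, ε n / (T - c n) = Fs) ∧
    (∀ T : ℝ, C < T → (∑ n, ε n / (T - c n) = Fs) →
      (∀ n, 0 < ε n / (T - c n)) ∧
      (∑ n, ε n / (T - c n) = Fs) ∧
      (∀ n, c n + ε n / (ε n / (T - c n)) = T) ∧
      Finset.univ.sup' ⟨⟨0, hN⟩, Finset.mem_univ _⟩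
        (fun n => c n + ε n / (ε n / (T - c n))) = T ∧
      (∀ g : Fin N → ℝ, (∀ n, 0 < g n) → (∑ n, g n ≤ Fs) →
        T ≤ Finset.univ.sup' ⟨⟨0, hN⟩, Finset.mem_univ _⟩
          (fun n => c n + ε n / g n))) := by
  have hne : (Finset.univ : Finset (Fin N)).Nonempty := ⟨⟨0, hN⟩, Finset.mem_univ _⟩
  have hcC : ∀ n, c n ≤ C := by
    intro n; rw [hC]; exact Finset.le_sup' c (Finset.mem_univ n)
  -- strict antitonicity
  have hanti : StrictAntiOn (fun T : ℝ => ∑ n, ε n / (T - c n)) (Set.Ioi C) := by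
    intro x hx y hy hxy
    apply Finset.sum_lt_sum_of_nonempty hne
    intro n _
    have h1 : 0 < x - c n := sub_pos.mpr (lt_of_le_of_lt (hcC n) hx)
    have h2 : x - c n < y - c n := by linarith
    exact div_lt_div_of_pos_left (hε n) h1 h2
  refine ⟨hanti, ?_, ?_⟩
  · -- existence and uniqueness
    obtain ⟨n0, -, hn0⟩ := Finset.exists_mem_eq_sup' hne c
    set δ : ℝ := ε n0 / Fs with hδdef
    have hδ : 0 < δ := div_pos (hε n0) hFs
    set S : ℝ := ∑ n, ε n with hSdef
    have hS : 0 < S := Finset.sum_pos (fun n _ => hε n) hne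
    set a : ℝ := C + δ with hadef
    set b : ℝ := C + S / Fs + δ with hbdef
    have hab : a ≤ b := by
      have : 0 < S / Fs := div_pos hS hFs
      simp only [hadef, hbdef]; linarith
    have hmem : ∀ T ∈ Set.Icc a b, ∀ n, 0 < T - c n := by
      intro T hT n
      have := hcC n
      have := hT.1
      simp only [hadef] at *
      linarith
    have hcont : ContinuousOn (fun T : ℝ => ∑ n, ε n / (T - c n)) (Set.Icc a b) := by
      apply continuousOn_finset_sum
      intro n _
      exact ContinuousOn.div continuousOn_const
        ((continuous_id.sub continuous_const).continuousOn)
        (fun T hT => ne_of_gt (hmem T hT n))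
    have hfa : Fs ≤ ∑ n, ε n / (a - c n) := by
      have h1 : ε n0 / (a - c n0) ≤ ∑ n, ε n / (a - c n) := by
        apply Finset.single_le_sum (f := fun n => ε n / (a - c n))
          (fun n _ => le_of_lt (div_pos (hε n) (hmem a (Set.left_mem_Icc.mpr hab) n)))
          (Finset.mem_univ n0)
      have h2 : Fs ≤ ε n0 / (a - c n0) := by
        have hd : 0 < a - c n0 := hmem a (Set.left_mem_Icc.mpr hab) n0
        have : a - c n0 ≤ δ := by
          have : C = c n0 := by rw [hC, hn0]
          simp only [hadef]; linarith
        calc Fs = ε n0 / δ := by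
              rw [hδdef]; field_simp [ne_of_gt (hε n0)]
          _ ≤ ε n0 / (a - c n0) := by
              apply div_le_div_of_nonneg_left (le_of_lt (hε n0)) hd this
      linarith
    have hfb : ∑ n, ε n / (b - c n) ≤ Fs := by
      have : ∀ n : Fin N, ε n / (b - c n) ≤ ε n / (S / Fs) := by
        intro n
        apply div_le_div_of_nonneg_left (le_of_lt (hε n)) (div_pos hS hFs)
        have := hcC n; simp only [hbdef]; linarith
      calc ∑ n, ε n / (b - c n) ≤ ∑ n, ε n / (S / Fs) :=
            Finset.sum_le_sum (fun n _ => this n)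
        _ = S / (S / Fs) := by rw [← Finset.sum_div]
        _ = Fs := by field_simp
    have hIVT := intermediate_value_Icc' hab hcont
    have hFsmem : Fs ∈ Set.Icc ((fun T : ℝ => ∑ n, ε n / (T - c n)) b)
        ((fun T : ℝ => ∑ n, ε n / (T - c n)) a) := ⟨hfb, hfa⟩
    obtain ⟨T, hT, hTeq⟩ := hIVT hFsmem
    have hTC : C < T := by
      have := hT.1; simp only [hadef] at this; linarith
    refine ⟨T, ⟨hTC, hTeq⟩, ?_⟩
    intro T' ⟨hT'C, hT'eq⟩
    by_contra hne'
    rcases lt_or_gt_of_ne hne' with h | h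
    · have := hanti hT'C hTC h
      simp only at this; simp only at hTeq
      rw [hTeq, hT'eq] at this; exact lt_irrefl _ this
    · have := hanti hTC hT'C h
      simp only at this; simp only at hTeq
      rw [hTeq, hT'eq] at this; exact lt_irrefl _ this
  · intro T hTC hTeq
    have hpos : ∀ n, 0 < T - c n := fun n => sub_pos.mpr (lt_of_le_of_lt (hcC n) hTC)
    have hfpos : ∀ n, 0 < ε n / (T - c n) := fun n => div_pos (hε n) (hpos n)
    have heq : ∀ n, c n + ε n / (ε n / (T - c n)) = T := by
      intro n
      have h1 : ε n ≠ 0 := ne_of_gt (hε n)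
      have h2 : T - c n ≠ 0 := ne_of_gt (hpos n)
      field_simp
      ring
    refine ⟨hfpos, hTeq, heq, ?_, ?_⟩
    · have : (fun n => c n + ε n / (ε n / (T - c n))) = fun _ => T := funext heq
      rw [this]; exact Finset.sup'_const _ _
    · intro g hg hgsum
      by_contra hlt
      push_neg at hlt
      have hall : ∀ n, c n + ε n / g n < T := by
        intro n
        exact lt_of_le_of_lt
          (Finset.le_sup' (fun n => c n + ε n / g n) (Finset.mem_univ n)) hlt
      have hkey : ∀ n, ε n / (T - c n) < g n := by
        intro n
        have h1 : ε n / g n < T - c n := by have := hall n; linarith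
        rw [div_lt_iff₀ (hpos n)]
        calc ε n = (ε n / g n) * g n := by field_simp [ne_of_gt (hg n)]
          _ < (T - c n) * g n := by
              exact mul_lt_mul_of_pos_right h1 (hg n)
          _ = g n * (T - c n) := mul_comm _ _
      have : Fs < ∑ n, g n := by
        rw [← hTeq]
        exact Finset.sum_lt_sum_of_nonempty hne (fun n _ => hkey n)
      linarith
end
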